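/- Let p = (f_1,f_2,f_3) and q = (g_1,g_2,g_3) be nondecreasing integer triples with entries ≥ 3 and negative combinatorial curvature. Suppose there exist indices {l,m,n} = {1,2,3} with m < n such that f_l ≥ g_l and f_m - g_m > g_n - f_n > 0. Then for every a > 0, Σ_{i=1}^3 β(f_i, a) > Σ_{i=1}^3 β(g_i, a), where β(x,a) = 2·arcsin(cos(π/x)/cosh(a/2)); consequently K_{a_c(p)}(q) > 0. -/

import Mathlib

open Real

/-- `β(n,a) = 2·arcsin(cos(π/n)/cosh(a/2))`. -/
noncomputable def beta (n : ℕ) (a : ℝ) : ℝ :=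
  2 * Real.arcsin (Real.cos (π / n) / Real.cosh (a / 2))

/-- Combinatorial curvature of a degree-3 pattern. -/
noncomputable def Phi3 (f : Fin 3 → ℕ) : ℝ :=
  -(1 / 2) + ∑ i, (1 : ℝ) / (f i)

/-! For `c = cosh (a / 2) > 1` the angle `x ↦ 2 arcsin (cos (π / x) / c)` is increasing and
strictly concave on `[2, ∞)`: with `t = π / x` its derivative is
`(2 / π) · t² · sin t / √(c² - 1 + sin² t)`, which grows with `t ∈ (0, π / 2]`.
Since `g_m < f_m ≤ f_n < g_n` and `g_n - f_n < f_m - g_m`, concavity bounds the increment of the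
angle over `[f_n, g_n]` by its increment over `[g_m, g_m + (g_n - f_n)]`, and monotonicity bounds
that by the increment over `[g_m, f_m]`; the `l`-terms compare by monotonicity alone. -/

namespace StrictConcaveOn

variable {s : Set ℝ} {f : ℝ → ℝ}

theorem map_add_sub_map_lt (hf : StrictConcaveOn ℝ s f) {a c δ : ℝ} (ha : a ∈ s)
    (hcδ : c + δ ∈ s) (hac : a < c) (hδ : 0 < δ) :
    f (c + δ) - f c < f (a + δ) - f a := by
  have hs := hf.1.ordConnected
  have haδ : a + δ ∈ s := hs.out ha hcδ ⟨by linarith, by linarith⟩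
  have hc : c ∈ s := hs.out ha hcδ ⟨hac.le, by linarith⟩
  have hswap : (f (c + δ) - f a) / (c + δ - a) = (f a - f (c + δ)) / (a - (c + δ)) := by
    rw [← neg_div_neg_eq, neg_sub, neg_sub]
  have hright : (f (c + δ) - f c) / δ < (f (c + δ) - f a) / (c + δ - a) := by
    rw [hswap, show (f (c + δ) - f c) / δ = (f c - f (c + δ)) / (c - (c + δ)) by ring]
    exact hf.secant_strict_mono hcδ ha hc (by linarith) (by linarith) hac
  have hleft : (f (c + δ) - f a) / (c + δ - a) < (f (a + δ) - f a) / δ := by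
    simpa only [add_sub_cancel_left] using
      hf.secant_strict_mono ha haδ hcδ (by linarith) (by linarith) (by linarith)
  exact (div_lt_div_iff_of_pos_right hδ).1 (hright.trans hleft)

theorem add_lt_add_of_monotoneOn (hf : StrictConcaveOn ℝ s f) (hmono : MonotoneOn f s)
    {a b c d : ℝ} (ha : a ∈ s) (hb : b ∈ s) (hd : d ∈ s) (hac : a < c) (hcd : c < d)
    (hsum : a + d ≤ b + c) : f a + f d < f b + f c := by
  have hδ : a + (d - c) ∈ s := hf.1.ordConnected.out ha hd ⟨by linarith, by linarith⟩
  have hconc := hf.map_add_sub_map_lt ha (by rwa [add_sub_cancel]) hac (sub_pos.2 hcd)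
  rw [add_sub_cancel] at hconc
  linarith [hmono hδ hb (by linarith)]

end StrictConcaveOn

theorem div_sqrt_add_sq_lt_div_sqrt_add_sq {k s t : ℝ} (hk : 0 < k) (hs : 0 ≤ s) (hst : s < t) :
    s / √(k + s ^ 2) < t / √(k + t ^ 2) := by
  have ht : 0 < t := hs.trans_lt hst
  have h₁ : 0 < √(k + s ^ 2) := sqrt_pos.2 (by positivity)
  have h₂ : 0 < √(k + t ^ 2) := sqrt_pos.2 (by positivity)
  rw [div_lt_div_iff₀ h₁ h₂]
  apply lt_of_pow_lt_pow_left₀ 2 (by positivity)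
  rw [mul_pow, mul_pow, sq_sqrt (by positivity), sq_sqrt (by positivity)]
  nlinarith [mul_pos (mul_pos hk (sub_pos.2 hst)) (add_pos_of_nonneg_of_pos hs ht)]

noncomputable def vertexAngle (c x : ℝ) : ℝ := 2 * arcsin (cos (π / x) / c)

noncomputable def vertexAngleDeriv (c x : ℝ) : ℝ :=
  2 / π * ((π / x) ^ 2 * (sin (π / x) / √(c ^ 2 - 1 + sin (π / x) ^ 2)))

theorem beta_eq_vertexAngle (n : ℕ) (a : ℝ) : beta n a = vertexAngle (cosh (a / 2)) n := rfl

theorem vertexAngle_monotoneOn {c : ℝ} (hc : 0 < c) : MonotoneOn (vertexAngle c) (Set.Ici 1) := by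
  intro x (hx : 1 ≤ x) y _ hxy
  have hx₀ : 0 < x := by linarith
  have hcos : cos (π / x) ≤ cos (π / y) :=
    cos_le_cos_of_nonneg_of_le_pi (div_nonneg pi_pos.le (by linarith)) (div_le_self pi_pos.le hx)
      (div_le_div_of_nonneg_left pi_pos.le hx₀ hxy)
  unfold vertexAngle
  gcongr

theorem hasDerivAt_vertexAngle {c x : ℝ} (hc : 1 < c) (hx : x ≠ 0) :
    HasDerivAt (vertexAngle c) (vertexAngleDeriv c x) x := by
  have hc₀ : 0 < c := by linarith
  have hu : |cos (π / x) / c| < 1 := by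
    rw [abs_div, abs_of_pos hc₀, div_lt_one hc₀]
    exact (abs_cos_le_one _).trans_lt hc
  have hinv : HasDerivAt (fun y : ℝ => π / y) (-(π / x ^ 2)) x := by
    simpa [div_eq_mul_inv] using (hasDerivAt_inv hx).const_mul π
  have hcos : HasDerivAt (fun y => cos (π / y) / c) (-sin (π / x) * -(π / x ^ 2) / c) x :=
    ((hasDerivAt_cos (π / x)).comp x hinv).div_const c
  have h := (hasDerivAt_arcsin (by linarith [neg_abs_le (cos (π / x) / c)])
    (by linarith [le_abs_self (cos (π / x) / c)])).comp x hcos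
  refine (h.const_mul 2).congr_deriv ?_
  have hsq : 1 - (cos (π / x) / c) ^ 2 = (c ^ 2 - 1 + sin (π / x) ^ 2) / c ^ 2 := by
    field_simp
    linarith [sin_sq_add_cos_sq (π / x)]
  have hpos : 0 < c ^ 2 - 1 + sin (π / x) ^ 2 := by nlinarith [sq_nonneg (sin (π / x))]
  rw [vertexAngleDeriv, hsq, sqrt_div hpos.le, sqrt_sq hc₀.le]
  have := (sqrt_pos.2 hpos).ne'
  field_simp

theorem vertexAngleDeriv_strictAntiOn {c : ℝ} (hc : 1 < c) :
    StrictAntiOn (vertexAngleDeriv c) (Set.Ici 2) := by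
  intro x (hx : 2 ≤ x) y _ hxy
  have hx₀ : 0 < x := by linarith
  have hy₀ : 0 < y := by linarith
  have ht : π / y < π / x := div_lt_div_of_pos_left pi_pos hx₀ hxy
  have ht₀ : 0 < π / y := by positivity
  have ht₁ : π / x ≤ π / 2 := div_le_div_of_nonneg_left pi_pos.le two_pos hx
  have hsin₀ : 0 < sin (π / y) := sin_pos_of_pos_of_lt_pi ht₀ (by linarith [pi_pos])
  have hsin : sin (π / y) < sin (π / x) :=
    strictMonoOn_sin ⟨by linarith, by linarith⟩ ⟨by linarith, ht₁⟩ ht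
  have hquot := div_sqrt_add_sq_lt_div_sqrt_add_sq (k := c ^ 2 - 1) (by nlinarith) hsin₀.le hsin
  unfold vertexAngleDeriv
  gcongr

theorem vertexAngle_strictConcaveOn {c : ℝ} (hc : 1 < c) :
    StrictConcaveOn ℝ (Set.Ici 2) (vertexAngle c) := by
  have hderiv (x : ℝ) (hx : 2 ≤ x) : HasDerivAt (vertexAngle c) (vertexAngleDeriv c x) x :=
    hasDerivAt_vertexAngle hc (by linarith)
  refine StrictAntiOn.strictConcaveOn_of_deriv (convex_Ici 2)
    (fun x hx => (hderiv x hx).continuousAt.continuousWithinAt) ?_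
  rw [interior_Ici]
  exact ((vertexAngleDeriv_strictAntiOn hc).mono Set.Ioi_subset_Ici_self).congr
    fun x hx => ((hderiv x (le_of_lt hx)).deriv).symm

theorem Fin.sum_univ_three_of_insert_eq_univ {M : Type*} [AddCommMonoid M] {l m n : Fin 3}
    (h : ({l, m, n} : Finset (Fin 3)) = Finset.univ) (u : Fin 3 → M) :
    ∑ i, u i = u l + u m + u n := by
  have hdistinct : l ≠ m ∧ l ≠ n ∧ m ≠ n := by revert l m n; decide
  rw [← h, Finset.sum_insert (by simp [hdistinct.1, hdistinct.2.1]),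
    Finset.sum_pair hdistinct.2.2, add_assoc]

theorem stmt17_general (f g : Fin 3 → ℕ) (hf : Monotone f)
    (hg3 : ∀ i, 3 ≤ g i)
    (hyp : ∃ l m n : Fin 3, ({l, m, n} : Finset (Fin 3)) = Finset.univ ∧ m < n ∧
      g l ≤ f l ∧ (0 : ℤ) < (g n : ℤ) - f n ∧ (g n : ℤ) - f n < (f m : ℤ) - g m) :
    (∀ a : ℝ, 0 < a → ∑ i, beta (g i) a < ∑ i, beta (f i) a) ∧
    ∀ a : ℝ, 0 < a → 2 * π - ∑ i, beta (f i) a = 0 →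
      0 < 2 * π - ∑ i, beta (g i) a := by
  obtain ⟨l, m, n, huniv, hmn, hl, hn, hgap⟩ := hyp
  have hfmn := hf hmn.le
  have hgl := hg3 l
  have hgm := hg3 m
  have hge (k : ℕ) (hk : 3 ≤ k) : (k : ℝ) ∈ Set.Ici 2 :=
    Set.mem_Ici.2 (by exact_mod_cast (by omega : 2 ≤ k))
  have hsum (a : ℝ) (ha : 0 < a) : ∑ i, beta (g i) a < ∑ i, beta (f i) a := by
    have hc : 1 < cosh (a / 2) := one_lt_cosh.2 (by positivity)
    have hmono := (vertexAngle_monotoneOn (by linarith)).mono (Set.Ici_subset_Ici.2 one_le_two)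
    have hlterm : vertexAngle (cosh (a / 2)) (g l) ≤ vertexAngle (cosh (a / 2)) (f l) :=
      hmono (hge _ hgl) (hge _ (by omega)) (by exact_mod_cast hl)
    have hmnterms := (vertexAngle_strictConcaveOn hc).add_lt_add_of_monotoneOn hmono (c := f n)
      (hge _ hgm) (hge (f m) (by omega)) (hge (g n) (by omega))
      (by exact_mod_cast (by omega : g m < f n)) (by exact_mod_cast (by omega : f n < g n))
      (by exact_mod_cast (by omega : g m + g n ≤ f m + f n))
    simp only [Fin.sum_univ_three_of_insert_eq_univ huniv, beta_eq_vertexAngle]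
    linarith
  exact ⟨hsum, fun a ha _ => by linarith [hsum a ha]⟩

/-- If `{l,m,n} = {1,2,3}`, `m < n`, `f_l ≥ g_l` and `f_m - g_m > g_n - f_n > 0`,
then `Σ β(f_i,a) > Σ β(g_i,a)` for every `a > 0`; in particular, at the critical
side length `a_c(p)` of `p = (f₁,f₂,f₃)` the angle defect of `q = (g₁,g₂,g₃)` is
positive: `K_{a_c(p)}(q) > 0`. -/
theorem stmt17 (f g : Fin 3 → ℕ) (hf : Monotone f) (hg : Monotone g)
    (hf3 : ∀ i, 3 ≤ f i) (hg3 : ∀ i, 3 ≤ g i)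
    (hfneg : Phi3 f < 0) (hgneg : Phi3 g < 0)
    (hyp : ∃ l m n : Fin 3, ({l, m, n} : Finset (Fin 3)) = Finset.univ ∧ m < n ∧
      g l ≤ f l ∧ (0 : ℤ) < (g n : ℤ) - f n ∧ (g n : ℤ) - f n < (f m : ℤ) - g m) :
    (∀ a : ℝ, 0 < a → ∑ i, beta (g i) a < ∑ i, beta (f i) a) ∧
    ∀ a : ℝ, 0 < a → 2 * π - ∑ i, beta (f i) a = 0 →
      0 < 2 * π - ∑ i, beta (g i) a :=
  stmt17_general f g hf hg3 hyp
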